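/- Let a ∈ ℂ be nonzero, and for a side-vector triple (a,b,c) with a+b+c = 0 set u = a+(2−√3)b, v = (2−√3)a+b, q = u+v·j, and let (x,y,z) denote the (i,j,k)-components of q⁻¹ · i · q. Then: (1) for the double point with c = 0, i.e. (a,b,c) = (a,−a,0), one gets (x,y,z) = (0,0,−1); (2) for the double point with b = 0, i.e. (a,b,c) = (a,0,−a), one gets (x,y,z) = (√3/2, 0, 1/2); (3) for the double point with a-slot zero, i.e. side vectors (0,b,−b) with b ≠ 0 (so u = (2−√3)b, v = b), one gets (x,y,z) = (−√3/2, 0, 1/2). Thus the three double-point classes map to three distinct points on the great circle y = 0 of the unit sphere. -/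

import Mathlib

/-- The quaternion `u + v·j` attached to a pair `(u,v) ∈ ℂ²`, with components
`(Re u, Im u, Re v, Im v)` in the basis `(1, i, j, k)`. -/
def toQuat (u v : ℂ) : Quaternion ℝ := ⟨u.re, u.im, v.re, v.im⟩

/-- The quaternion `i`, with components `(0,1,0,0)`. -/
def qi : Quaternion ℝ := ⟨0, 1, 0, 0⟩

/-- The quaternion with components `(r, x, y, z)` in the basis `(1, i, j, k)`. -/
def mkQ (r x y z : ℝ) : Quaternion ℝ := ⟨r, x, y, z⟩

attribute [simps] toQuat qi mkQ

/-!
Left multiplication by a nonzero complex number `c` sends `q = u + v·j` to `c·u + c·v·j`, and `c`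
commutes with `i`; hence `q⁻¹·i·q` depends only on the class of `(u, v)` up to complex scaling.
The three double points give multiples of `(1, -1)`, `(1, 2 - √3)` and `(2 - √3, 1)`, and for each
of these the value `r` of `q⁻¹·i·q` is confirmed by the identity `i·q = q·r`.
-/

section DivisionRing

variable {D : Type*} [DivisionRing D]

theorem inv_mul_mul_eq_of_mul_eq {q x r : D} (hq : q ≠ 0) (h : x * q = q * r) :
    q⁻¹ * x * q = r := by
  rw [mul_assoc, h, ← mul_assoc, inv_mul_cancel₀ hq, one_mul]

theorem inv_mul_mul_mul_left_of_commute {p q x : D} (hp : p ≠ 0) (h : Commute p x) :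
    (p * q)⁻¹ * x * (p * q) = q⁻¹ * x * q := by
  calc (p * q)⁻¹ * x * (p * q) = q⁻¹ * (p⁻¹ * (x * p)) * q := by
        simp only [mul_inv_rev, mul_assoc]
    _ = q⁻¹ * x * q := by rw [← h.eq, inv_mul_cancel_left₀ hp, mul_assoc]

end DivisionRing

theorem toQuat_eq_zero_iff {u v : ℂ} : toQuat u v = 0 ↔ u = 0 ∧ v = 0 := by
  rw [Quaternion.ext_iff, Complex.ext_iff, Complex.ext_iff, and_assoc]
  rfl

theorem toQuat_mul_mul (c u v : ℂ) : toQuat (c * u) (c * v) = toQuat c 0 * toQuat u v := by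
  ext <;> simp

theorem commute_toQuat_qi (c : ℂ) : Commute (toQuat c 0) qi := by
  ext <;> simp

theorem conj_qi_toQuat_eq_of_eq_mul {c u v u₀ v₀ : ℂ} (hc : c ≠ 0) (hu : u = c * u₀)
    (hv : v = c * v₀) :
    (toQuat u v)⁻¹ * qi * toQuat u v = (toQuat u₀ v₀)⁻¹ * qi * toQuat u₀ v₀ := by
  rw [hu, hv, toQuat_mul_mul]
  exact inv_mul_mul_mul_left_of_commute (by simp [toQuat_eq_zero_iff, hc]) (commute_toQuat_qi c)

theorem mkQ_inj {r x y z r' x' y' z' : ℝ} :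
    mkQ r x y z = mkQ r' x' y' z' ↔ r = r' ∧ x = x' ∧ y = y' ∧ z = z' :=
  Quaternion.ext_iff

theorem conj_qi_toQuat_one_neg_one :
    (toQuat 1 (-1))⁻¹ * qi * toQuat 1 (-1) = mkQ 0 0 0 (-1) := by
  refine inv_mul_mul_eq_of_mul_eq (by simp [toQuat_eq_zero_iff]) ?_
  ext <;> simp

theorem conj_qi_toQuat_one_two_sub_sqrt_three :
    (toQuat 1 (2 - (Real.sqrt 3 : ℂ)))⁻¹ * qi * toQuat 1 (2 - (Real.sqrt 3 : ℂ)) =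
      mkQ 0 (Real.sqrt 3 / 2) 0 (1 / 2) := by
  have hs : Real.sqrt 3 * Real.sqrt 3 = 3 := Real.mul_self_sqrt (by norm_num)
  refine inv_mul_mul_eq_of_mul_eq (by simp [toQuat_eq_zero_iff]) ?_
  ext <;> simp <;> linarith

theorem conj_qi_toQuat_two_sub_sqrt_three_one :
    (toQuat (2 - (Real.sqrt 3 : ℂ)) 1)⁻¹ * qi * toQuat (2 - (Real.sqrt 3 : ℂ)) 1 =
      mkQ 0 (-(Real.sqrt 3 / 2)) 0 (1 / 2) := by
  have hs : Real.sqrt 3 * Real.sqrt 3 = 3 := Real.mul_self_sqrt (by norm_num)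
  refine inv_mul_mul_eq_of_mul_eq (by simp [toQuat_eq_zero_iff]) ?_
  ext <;> simp <;> linarith

/-- with `k = 2−√3`, `u = a+k·b`, `v = k·a+b`, `q = u+vj`, and
`(x,y,z)` the `(i,j,k)`-components of `q⁻¹·i·q`:
(1) the double point `(a,b,c) = (a,−a,0)` (with `a ≠ 0`) gives `(x,y,z) = (0,0,−1)`;
(2) the double point `(a,0,−a)` gives `(x,y,z) = (√3/2, 0, 1/2)`;
(3) the double point `(0,b,−b)` (with `b ≠ 0`) gives `(x,y,z) = (−√3/2, 0, 1/2)`.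
Thus the three double-point classes map to three distinct points of the great
circle `y = 0` on the unit sphere. -/
theorem stmt13 (k : ℂ) (hk : k = 2 - (Real.sqrt 3 : ℂ)) :
    (∀ a : ℂ, a ≠ 0 →
      (toQuat (a + k * (-a)) (k * a + (-a)))⁻¹ * qi * toQuat (a + k * (-a)) (k * a + (-a))
        = mkQ 0 0 0 (-1)) ∧
    (∀ a : ℂ, a ≠ 0 →
      (toQuat (a + k * 0) (k * a + 0))⁻¹ * qi * toQuat (a + k * 0) (k * a + 0)
        = mkQ 0 (Real.sqrt 3 / 2) 0 (1 / 2)) ∧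
    (∀ b : ℂ, b ≠ 0 →
      (toQuat (0 + k * b) (k * 0 + b))⁻¹ * qi * toQuat (0 + k * b) (k * 0 + b)
        = mkQ 0 (-(Real.sqrt 3 / 2)) 0 (1 / 2)) ∧
    mkQ 0 0 0 (-1) ≠ mkQ 0 (Real.sqrt 3 / 2) 0 (1 / 2) ∧
    mkQ 0 0 0 (-1) ≠ mkQ 0 (-(Real.sqrt 3 / 2)) 0 (1 / 2) ∧
    mkQ 0 (Real.sqrt 3 / 2) 0 (1 / 2) ≠ mkQ 0 (-(Real.sqrt 3 / 2)) 0 (1 / 2) := by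
  subst hk
  have hsqrt_ne_one : (Real.sqrt 3 : ℂ) - 1 ≠ 0 := by
    rw [sub_ne_zero, ← Complex.ofReal_one, Ne, Complex.ofReal_inj, Real.sqrt_eq_one]
    norm_num
  refine ⟨fun a ha => ?_, fun a ha => ?_, fun b hb => ?_, ?_, ?_, ?_⟩
  · rw [conj_qi_toQuat_eq_of_eq_mul (u₀ := 1) (v₀ := -1) (mul_ne_zero hsqrt_ne_one ha)
      (by ring) (by ring), conj_qi_toQuat_one_neg_one]
  · rw [conj_qi_toQuat_eq_of_eq_mul (u₀ := 1) (v₀ := 2 - Real.sqrt 3) ha (by ring) (by ring),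
      conj_qi_toQuat_one_two_sub_sqrt_three]
  · rw [conj_qi_toQuat_eq_of_eq_mul (u₀ := 2 - Real.sqrt 3) (v₀ := 1) hb (by ring) (by ring),
      conj_qi_toQuat_two_sub_sqrt_three_one]
  all_goals rw [Ne, mkQ_inj]; norm_num [CharZero.eq_neg_self_iff]
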